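/- In the heterogeneous setting where Z_1,…,Z_n are independent random variables taking values in possibly different measurable spaces 𝒵_1,…,𝒵_n and f : 𝒵_1 × ⋯ × 𝒵_n → ℝ is measurable with f(S) square-integrable, the pair (Δ, √V) is a canonical pair; that is, for every λ ∈ ℝ one has E[exp(λ·Δ − (λ²/2)·V)] ≤ 1. -/

import Mathlib

/-!
Write `D_k = f(S) - f(S^{(k)})`, `𝓕_k = σ(Z_1, …, Z_k)` and `M_k = E[f(S) | 𝓕_k]`.
Since `f(S^{(k)})` does not involve `Z_k` and `Z'_k` has the law of `Z_k` independently of the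
other coordinates, `E[f(S^{(k)}) | 𝓕_k] = M_{k-1}`. Hence
`q_k := E[λ D_k - λ² D_k² / 2 | 𝓕_k] = λ (M_k - M_{k-1}) - λ² E[D_k² | 𝓕_k] / 2`,
and the `q_k` add up to `λ Δ - λ² V / 2`.

Given `𝓕_{k-1}`, exchanging `Z_k` and `Z'_k` preserves the joint law and changes the sign of
`D_k`, so `e^{u - u²/2} + e^{-u - u²/2} = 2 cosh u e^{-u²/2} ≤ 2` gives
`E[exp (λ D_k - λ² D_k² / 2) | 𝓕_{k-1}] ≤ 1`. Conditional Jensen bounds `e^{q_k}` by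
`E[exp (λ D_k - λ² D_k² / 2) | 𝓕_k]`, so by the tower property `E[exp (q_1 + ⋯ + q_k)]` does
not increase with `k` and stays below its value `1` at `k = 0`.
-/

open MeasureTheory ProbabilityTheory Real ENNReal Finset

variable {Ω : Type*} [MeasurableSpace Ω] {n : ℕ} {𝒵 : Fin n → Type*}
  [∀ i, MeasurableSpace (𝒵 i)]

/-- The sample `S = (Z_1, …, Z_n)` in the heterogeneous setting. -/
def sampleDep (Z : ∀ i : Fin n, Ω → 𝒵 i) (ω : Ω) : ∀ i, 𝒵 i := fun i => Z i ω

/-- `S^{(k)}`: the sample with its `k`-th coordinate replaced by `Z'_k`. -/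
def sampleRepDep (Z Z' : ∀ i : Fin n, Ω → 𝒵 i) (k : Fin n) (ω : Ω) : ∀ i, 𝒵 i :=
  Function.update (sampleDep Z ω) k (Z' k ω)

/-- The σ-algebra generated by `Z_1, …, Z_m`. -/
def filtDep (Z : ∀ i : Fin n, Ω → 𝒵 i) (m : ℕ) : MeasurableSpace Ω :=
  ⨆ i : Fin n, ⨆ _ : (i : ℕ) < m, MeasurableSpace.comap (Z i) inferInstance

/-- The gap `Δ = f(S) − E[f(S)]`. -/
noncomputable def gapDep (P : Measure Ω) (Z : ∀ i : Fin n, Ω → 𝒵 i)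
    (f : (∀ i, 𝒵 i) → ℝ) (ω : Ω) : ℝ :=
  f (sampleDep Z ω) - ∫ ω', f (sampleDep Z ω') ∂P

/-- The semi-empirical variance estimator
`V = Σ_{k=1}^n E[(f(S) − f(S^{(k)}))² | Z_1, …, Z_k]`. -/
noncomputable def varEstDep (P : Measure Ω) (Z Z' : ∀ i : Fin n, Ω → 𝒵 i)
    (f : (∀ i, 𝒵 i) → ℝ) (ω : Ω) : ℝ :=
  ∑ k : Fin n,
    (P[fun ω' => (f (sampleDep Z ω') - f (sampleRepDep Z Z' k ω')) ^ 2 |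
      filtDep Z (k + 1)]) ω

set_option linter.unusedSectionVars false

section General

variable {Ω : Type*} {m m₁ m₂ : MeasurableSpace Ω} [mΩ : MeasurableSpace Ω] {μ : Measure Ω}

theorem condExp_comap_ae_eq_integral_of_indepFun [IsFiniteMeasure μ] {α β : Type*}
    [MeasurableSpace α] [MeasurableSpace β] {X : Ω → α} {Y : Ω → β}
    (hX : Measurable X) (hY : Measurable Y) (hXY : IndepFun X Y μ)
    {φ : α × β → ℝ} (hφ : Measurable φ) (hint : Integrable (fun ω => φ (X ω, Y ω)) μ) :
    μ[fun ω => φ (X ω, Y ω) | MeasurableSpace.comap X inferInstance]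
      =ᵐ[μ] fun ω => ∫ y, φ (X ω, y) ∂(μ.map Y) := by
  have hmap : μ.map (fun ω => (X ω, Y ω)) = (μ.map X).prod (μ.map Y) :=
    hXY.map_prod_eq_prod_map_map hX.aemeasurable hY.aemeasurable
  have hφint : Integrable φ ((μ.map X).prod (μ.map Y)) := by
    rwa [← hmap, integrable_map_measure hφ.aestronglyMeasurable (hX.prodMk hY).aemeasurable]
  have hG : StronglyMeasurable fun x => ∫ y, φ (x, y) ∂(μ.map Y) :=
    hφ.stronglyMeasurable.integral_prod_right'
  refine (ae_eq_condExp_of_forall_setIntegral_eq hX.comap_le hint (fun _ _ _ => ?_) ?_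
    (hG.comp_measurable (measurable_iff_comap_le.mpr le_rfl)).aestronglyMeasurable).symm
  · exact ((integrable_map_measure hG.aestronglyMeasurable hX.aemeasurable).mp
      hφint.integral_prod_left).integrableOn
  · rintro _ ⟨t, ht, rfl⟩ _
    simp only [Function.comp_def]
    have hpre : (fun ω => (X ω, Y ω)) ⁻¹' (t ×ˢ Set.univ) = X ⁻¹' t := by ext; simp
    rw [← setIntegral_map ht hG.aestronglyMeasurable hX.aemeasurable, ← hpre,
      ← setIntegral_map (ht.prod MeasurableSet.univ) hφ.aestronglyMeasurable
        (hX.prodMk hY).aemeasurable, hmap, ← Measure.restrict_prod_eq_prod_univ,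
      integral_prod _ (hφint.mono_measure (Measure.prod_mono Measure.restrict_le_self le_rfl))]

theorem indepFun_of_measurable_iSup {ι α β : Type*} [MeasurableSpace α]
    [MeasurableSpace β] {m : ι → MeasurableSpace Ω} (hm : ∀ i, m i ≤ mΩ) (h : iIndep m μ)
    {S T : Set ι} (hST : Disjoint S T) {X : Ω → α} {Y : Ω → β}
    (hX : Measurable[⨆ i ∈ S, m i] X) (hY : Measurable[⨆ i ∈ T, m i] Y) : IndepFun X Y μ :=
  indep_of_indep_of_le_right (indep_of_indep_of_le_left (indep_iSup_of_disjoint hm h hST)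
    hX.comap_le) hY.comap_le

theorem identDistrib_prodMk_swap_of_indepFun [IsFiniteMeasure μ] {α γ : Type*}
    [MeasurableSpace α] [MeasurableSpace γ] {A B : Ω → α} {C : Ω → γ}
    (hA : Measurable A) (hB : Measurable B) (hC : Measurable C)
    (hABC : IndepFun A (fun ω => (B ω, C ω)) μ) (hBAC : IndepFun B (fun ω => (A ω, C ω)) μ)
    (hAB : IdentDistrib A B μ μ) :
    IdentDistrib (fun ω => (A ω, B ω, C ω)) (fun ω => (B ω, A ω, C ω)) μ μ := by
  refine ⟨(hA.prodMk (hB.prodMk hC)).aemeasurable, (hB.prodMk (hA.prodMk hC)).aemeasurable, ?_⟩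
  have hAC : IndepFun A C μ := hABC.comp measurable_id measurable_snd
  have hBC : IndepFun B C μ := hBAC.comp measurable_id measurable_snd
  rw [hABC.map_prod_eq_prod_map_map hA.aemeasurable (hB.prodMk hC).aemeasurable,
    hBAC.map_prod_eq_prod_map_map hB.aemeasurable (hA.prodMk hC).aemeasurable,
    hBC.map_prod_eq_prod_map_map hB.aemeasurable hC.aemeasurable,
    hAC.map_prod_eq_prod_map_map hA.aemeasurable hC.aemeasurable, hAB.map_eq]

theorem integral_le_of_map_eq_self {β : Type*} [MeasurableSpace β] {ν : Measure β}
    [IsProbabilityMeasure ν] {σ : β → β} (hσ : Measurable σ) (hν : ν.map σ = ν) {ψ : β → ℝ}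
    {c : ℝ} (hψ : Integrable ψ ν) (hψσ : ∀ t, ψ t + ψ (σ t) ≤ 2 * c) :
    ∫ t, ψ t ∂ν ≤ c := by
  have hψ' : Integrable ψ (ν.map σ) := by rwa [hν]
  have hσψ : Integrable (fun t => ψ (σ t)) ν :=
    (integrable_map_measure hψ'.1 hσ.aemeasurable).mp hψ'
  have hinv : ∫ t, ψ (σ t) ∂ν = ∫ t, ψ t ∂ν := by
    rw [← integral_map hσ.aemeasurable hψ'.1, hν]
  have := integral_mono (hψ.add hσψ) (integrable_const (2 * c)) hψσ
  rw [integral_add' hψ hσψ, hinv, integral_const, probReal_univ, one_smul] at this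
  linarith

theorem mul_sub_sq_le_half (l y : ℝ) : l * y - l ^ 2 / 2 * y ^ 2 ≤ 1 / 2 := by
  nlinarith [sq_nonneg (l * y - 1)]

theorem exp_sub_add_exp_neg_sub_le_two (u : ℝ) :
    exp (u - u ^ 2 / 2) + exp (-u - u ^ 2 / 2) ≤ 2 := by
  have h : exp (u - u ^ 2 / 2) + exp (-u - u ^ 2 / 2) = 2 * cosh u * exp (-(u ^ 2 / 2)) := by
    rw [cosh_eq, sub_eq_add_neg, sub_eq_add_neg, exp_add, exp_add]; ring
  calc exp (u - u ^ 2 / 2) + exp (-u - u ^ 2 / 2) = 2 * cosh u * exp (-(u ^ 2 / 2)) := h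
    _ ≤ 2 * exp (u ^ 2 / 2) * exp (-(u ^ 2 / 2)) := by gcongr; exact cosh_le_exp_half_sq u
    _ = 2 := by rw [mul_assoc, ← exp_add, add_neg_cancel, exp_zero, mul_one]

theorem integrable_exp_of_ae_le [IsFiniteMeasure μ] {g : Ω → ℝ} {c : ℝ}
    (hg : AEStronglyMeasurable g μ) (hgc : ∀ᵐ ω ∂μ, g ω ≤ c) :
    Integrable (fun ω => exp (g ω)) μ := by
  refine (integrable_const (exp c)).mono' (continuous_exp.comp_aestronglyMeasurable hg) ?_
  filter_upwards [hgc] with ω hω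
  rw [norm_of_nonneg (exp_pos _).le]
  exact exp_le_exp.mpr hω

theorem integral_exp_mul_sub_sq_le_one {β : Type*} [MeasurableSpace β] {ν : Measure β}
    [IsProbabilityMeasure ν] {σ : β → β} (hσ : Measurable σ) (hν : ν.map σ = ν) {d : β → ℝ}
    (hd : Measurable d) (hdσ : ∀ t, d (σ t) = -d t) (l : ℝ) :
    ∫ t, exp (l * d t - l ^ 2 / 2 * d t ^ 2) ∂ν ≤ 1 := by
  refine integral_le_of_map_eq_self hσ hν (integrable_exp_of_ae_le (by fun_prop)
    (ae_of_all _ fun _ => mul_sub_sq_le_half _ _)) fun t => ?_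
  rw [hdσ, mul_one]
  convert exp_sub_add_exp_neg_sub_le_two (l * d t) using 3 <;> ring

theorem condExp_le_const_of_le [IsFiniteMeasure μ] (hm : m ≤ mΩ)
    {g : Ω → ℝ} {c : ℝ} (hg : Integrable g μ) (hgc : ∀ᵐ ω ∂μ, g ω ≤ c) :
    ∀ᵐ ω ∂μ, μ[g | m] ω ≤ c := by
  filter_upwards [condExp_mono (m := m) hg (integrable_const c) hgc] with ω hω
  rwa [condExp_const hm] at hω

theorem condExp_mul_sub_mul {g h : Ω → ℝ} (hg : Integrable g μ) (hh : Integrable h μ)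
    (a b : ℝ) :
    μ[fun ω => a * g ω - b * h ω | m] =ᵐ[μ] fun ω => a * μ[g | m] ω - b * μ[h | m] ω := by
  show μ[a • g - b • h | m] =ᵐ[μ] _
  filter_upwards [condExp_sub (hg.smul a) (hh.smul b) m, condExp_smul a g m,
    condExp_smul b h m] with ω e₁ e₂ e₃
  rw [e₁, Pi.sub_apply, e₂, e₃]
  rfl

theorem integral_mul_condExp_of_stronglyMeasurable (hm : m ≤ mΩ)
    [SigmaFinite (μ.trim hm)] {B h : Ω → ℝ} (hB : StronglyMeasurable[m] B)
    (hBh : Integrable (B * h) μ) (hh : Integrable h μ) :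
    ∫ ω, B ω * μ[h | m] ω ∂μ = ∫ ω, B ω * h ω ∂μ :=
  calc ∫ ω, B ω * μ[h | m] ω ∂μ = ∫ ω, μ[B * h | m] ω ∂μ :=
        integral_congr_ae (condExp_mul_of_stronglyMeasurable_left hB hBh hh).symm
    _ = ∫ ω, B ω * h ω ∂μ := integral_condExp hm

theorem integral_mul_exp_condExp_le [IsFiniteMeasure μ]
    (h₁₂ : m₁ ≤ m₂) (h₂ : m₂ ≤ mΩ) {B g : Ω → ℝ} {c : ℝ} (hB : StronglyMeasurable[m₁] B)
    (hB_int : Integrable B μ) (hB_nonneg : 0 ≤ B) (hg : Integrable g μ) (hgc : ∀ ω, g ω ≤ c)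
    (hK : μ[fun ω => exp (g ω) | m₁] ≤ᵐ[μ] 1) :
    ∫ ω, B ω * exp (μ[g | m₂] ω) ∂μ ≤ ∫ ω, B ω ∂μ := by
  set h : Ω → ℝ := fun ω => exp (g ω)
  have hh : Integrable h μ := integrable_exp_of_ae_le hg.1 (ae_of_all _ hgc)
  have hBh : Integrable (B * h) μ := hB_int.mul_bdd hh.1 (ae_of_all _ fun ω => by
    rw [norm_of_nonneg (exp_pos _).le]; exact exp_le_exp.mpr (hgc ω))
  have hB₂ : StronglyMeasurable[m₂] B := hB.mono h₁₂
  have hjensen : ∀ᵐ ω ∂μ, exp (μ[g | m₂] ω) ≤ μ[h | m₂] ω :=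
    convexOn_exp.map_condExp_le_univ h₂ continuous_exp.lowerSemicontinuous hg hh
  calc ∫ ω, B ω * exp (μ[g | m₂] ω) ∂μ ≤ ∫ ω, B ω * μ[h | m₂] ω ∂μ := by
        refine integral_mono_of_nonneg (ae_of_all _ fun ω => ?_)
          (integrable_condExp.congr (condExp_mul_of_stronglyMeasurable_left hB₂ hBh hh)) ?_
        · exact mul_nonneg (hB_nonneg ω) (exp_pos _).le
        · filter_upwards [hjensen] with ω hω
          exact mul_le_mul_of_nonneg_left hω (hB_nonneg ω)
    _ = ∫ ω, B ω * h ω ∂μ := integral_mul_condExp_of_stronglyMeasurable h₂ hB₂ hBh hh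
    _ = ∫ ω, B ω * μ[h | m₁] ω ∂μ :=
        (integral_mul_condExp_of_stronglyMeasurable (h₁₂.trans h₂) hB hBh hh).symm
    _ ≤ ∫ ω, B ω ∂μ := by
        refine integral_mono_of_nonneg ?_ hB_int ?_
        · filter_upwards [condExp_nonneg (m := m₁) (ae_of_all μ fun ω => (exp_pos (g ω)).le)]
            with ω hω
          exact mul_nonneg (hB_nonneg ω) hω
        · filter_upwards [hK] with ω hω
          exact mul_le_of_le_one_right (hB_nonneg ω) hω


variable {𝓕 : ℕ → MeasurableSpace Ω}

theorem integrable_exp_sum_condExp [IsFiniteMeasure μ] (h𝓕_le : ∀ k, 𝓕 k ≤ mΩ) {N : ℕ}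
    {g : Fin N → Ω → ℝ} {c : ℝ} (hg : ∀ k, Integrable (g k) μ) (hgc : ∀ k ω, g k ω ≤ c) :
    Integrable (fun ω => exp (∑ k : Fin N, μ[g k | 𝓕 (k + 1)] ω)) μ := by
  refine integrable_exp_of_ae_le (c := N * c) (Finset.stronglyMeasurable_fun_sum _ fun k _ =>
    stronglyMeasurable_condExp.mono (h𝓕_le _)).aestronglyMeasurable ?_
  filter_upwards [ae_all_iff.2 fun k : Fin N =>
    condExp_le_const_of_le (m := 𝓕 (k + 1)) (h𝓕_le _) (hg k) (ae_of_all _ (hgc k))] with ω hω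
  simpa using Finset.sum_le_sum fun k (_ : k ∈ univ) => hω k

theorem integral_exp_sum_condExp_le_one [IsProbabilityMeasure μ] (h𝓕 : Monotone 𝓕)
    (h𝓕_le : ∀ k, 𝓕 k ≤ mΩ) {N : ℕ} {g : Fin N → Ω → ℝ} {c : ℝ}
    (hg : ∀ k, Integrable (g k) μ) (hgc : ∀ k ω, g k ω ≤ c)
    (hK : ∀ k : Fin N, μ[fun ω => exp (g k ω) | 𝓕 k] ≤ᵐ[μ] 1) :
    ∫ ω, exp (∑ k : Fin N, μ[g k | 𝓕 (k + 1)] ω) ∂μ ≤ 1 := by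
  induction N with
  | zero => simp
  | succ N ih =>
    set A : Ω → ℝ := fun ω => ∑ k : Fin N, μ[g k.castSucc | 𝓕 (k + 1)] ω
    have hA : StronglyMeasurable[𝓕 N] A := Finset.stronglyMeasurable_fun_sum _ fun k _ =>
      stronglyMeasurable_condExp.mono (h𝓕 (Nat.succ_le_of_lt k.isLt))
    calc ∫ ω, exp (∑ k : Fin (N + 1), μ[g k | 𝓕 (k + 1)] ω) ∂μ
        = ∫ ω, exp (A ω) * exp (μ[g (Fin.last N) | 𝓕 (N + 1)] ω) ∂μ := by
          simp [A, Fin.sum_univ_castSucc, exp_add]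
      _ ≤ ∫ ω, exp (A ω) ∂μ :=
          integral_mul_exp_condExp_le (h𝓕 N.le_succ) (h𝓕_le _)
            (continuous_exp.comp_stronglyMeasurable hA)
            (integrable_exp_sum_condExp h𝓕_le (fun k => hg _) (fun k => hgc _))
            (fun ω => (exp_pos _).le) (hg _) (hgc _) (hK (Fin.last N))
      _ ≤ 1 := ih (fun k => hg _) (fun k => hgc _) (fun k => hK k.castSucc)

theorem lintegral_exp_sum_condExp_le_one [IsProbabilityMeasure μ] (h𝓕 : Monotone 𝓕)
    (h𝓕_le : ∀ k, 𝓕 k ≤ mΩ) {N : ℕ} {g : Fin N → Ω → ℝ} {c : ℝ}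
    (hg : ∀ k, Integrable (g k) μ) (hgc : ∀ k ω, g k ω ≤ c)
    (hK : ∀ k : Fin N, μ[fun ω => exp (g k ω) | 𝓕 k] ≤ᵐ[μ] 1) :
    ∫⁻ ω, ENNReal.ofReal (exp (∑ k : Fin N, μ[g k | 𝓕 (k + 1)] ω)) ∂μ ≤ 1 := by
  rw [← ofReal_integral_eq_lintegral_ofReal (integrable_exp_sum_condExp h𝓕_le hg hgc)
    (ae_of_all _ fun ω => (exp_pos _).le)]
  exact ENNReal.ofReal_le_one.mpr (integral_exp_sum_condExp_le_one h𝓕 h𝓕_le hg hgc hK)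

end General

section Coordinates

def samplePrefix (Z : ∀ i : Fin n, Ω → 𝒵 i) (m : ℕ) (ω : Ω) :
    ∀ i : {i : Fin n // (i : ℕ) < m}, 𝒵 i :=
  fun i => Z i ω

def sampleSuffix (Z : ∀ i : Fin n, Ω → 𝒵 i) (k : Fin n) (ω : Ω) :
    ∀ i : {i : Fin n // k < i}, 𝒵 i :=
  fun i => Z i ω

def assemble (k : Fin n) (x : ∀ i : {i : Fin n // (i : ℕ) < k}, 𝒵 i) (z : 𝒵 k)
    (w : ∀ i : {i : Fin n // k < i}, 𝒵 i) : ∀ i, 𝒵 i :=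
  fun i => if h : (i : ℕ) < k then x ⟨i, h⟩ else if h' : i = k then h' ▸ z
    else w ⟨i, lt_of_le_of_ne (not_lt.mp h) (Ne.symm h')⟩

theorem measurable_samplePrefix {Z : ∀ i : Fin n, Ω → 𝒵 i} (hZ : ∀ i, Measurable (Z i))
    (m : ℕ) : Measurable (samplePrefix Z m) :=
  measurable_pi_lambda _ fun i => hZ i

theorem measurable_sampleSuffix {Z : ∀ i : Fin n, Ω → 𝒵 i} (hZ : ∀ i, Measurable (Z i))
    (k : Fin n) : Measurable (sampleSuffix Z k) :=
  measurable_pi_lambda _ fun i => hZ i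

@[fun_prop]
theorem measurable_assemble {α : Type*} [MeasurableSpace α] {k : Fin n}
    {x : α → ∀ i : {i : Fin n // (i : ℕ) < k}, 𝒵 i} {z : α → 𝒵 k}
    {w : α → ∀ i : {i : Fin n // k < i}, 𝒵 i} (hx : Measurable x) (hz : Measurable z)
    (hw : Measurable w) : Measurable fun a => assemble k (x a) (z a) (w a) := by
  refine measurable_pi_lambda _ fun i => ?_
  unfold assemble
  split_ifs with h h'
  · exact (measurable_pi_apply _).comp hx
  · subst h'; exact hz
  · exact (measurable_pi_apply _).comp hw

theorem assemble_eq_sampleDep (Z : ∀ i : Fin n, Ω → 𝒵 i) (k : Fin n) (ω : Ω) :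
    assemble k (samplePrefix Z k ω) (Z k ω) (sampleSuffix Z k ω) = sampleDep Z ω := by
  funext i
  simp only [assemble, samplePrefix, sampleSuffix, sampleDep]
  split_ifs with h h'
  · rfl
  · subst h'; rfl
  · rfl

theorem assemble_eq_sampleRepDep (Z Z' : ∀ i : Fin n, Ω → 𝒵 i) (k : Fin n) (ω : Ω) :
    assemble k (samplePrefix Z k ω) (Z' k ω) (sampleSuffix Z k ω) = sampleRepDep Z Z' k ω := by
  funext i
  simp only [assemble, samplePrefix, sampleSuffix, sampleRepDep]
  split_ifs with h h'
  · rw [Function.update_of_ne (by rintro rfl; exact lt_irrefl _ h)]; rfl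
  · subst h'; simp
  · rw [Function.update_of_ne h']; rfl

theorem comap_samplePrefix (Z : ∀ i : Fin n, Ω → 𝒵 i) (m : ℕ) :
    MeasurableSpace.comap (samplePrefix Z m) inferInstance = filtDep Z m := by
  simp only [MeasurableSpace.pi, MeasurableSpace.comap_iSup, MeasurableSpace.comap_comp]
  rw [filtDep, iSup_subtype']
  rfl

theorem filtDep_le (Z : ∀ i : Fin n, Ω → 𝒵 i) (hZ : ∀ i, Measurable (Z i)) (m : ℕ) :
    filtDep Z m ≤ ‹MeasurableSpace Ω› :=
  iSup₂_le fun i _ => (hZ i).comap_le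

theorem filtDep_mono (Z : ∀ i : Fin n, Ω → 𝒵 i) : Monotone (filtDep Z) :=
  fun _ _ h => iSup₂_mono' fun i hi => ⟨i, hi.trans_le h, le_rfl⟩

theorem filtDep_zero (Z : ∀ i : Fin n, Ω → 𝒵 i) : filtDep Z 0 = ⊥ := by
  simp [filtDep]

theorem measurable_sampleDep_filtDep (Z : ∀ i : Fin n, Ω → 𝒵 i) :
    Measurable[filtDep Z n] (sampleDep Z) :=
  @measurable_pi_lambda _ _ _ (filtDep Z n) _ _ fun i => Measurable.of_comap_le <|
    le_iSup₂ (f := fun (i : Fin n) (_ : (i : ℕ) < n) => MeasurableSpace.comap (Z i) inferInstance)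
      i i.isLt

end Coordinates

section Independence

variable {P : Measure Ω} {Z Z' : ∀ i : Fin n, Ω → 𝒵 i}

def coordSigma (Z Z' : ∀ i : Fin n, Ω → 𝒵 i) : Fin n ⊕ Fin n → MeasurableSpace Ω :=
  Sum.elim (fun i => MeasurableSpace.comap (Z i) inferInstance)
    (fun i => MeasurableSpace.comap (Z' i) inferInstance)

theorem iIndep_coordSigma
    (hindep : iIndepFun (β := Sum.elim 𝒵 𝒵)
      (m := fun x => Sum.rec (motive := fun x => MeasurableSpace (Sum.elim 𝒵 𝒵 x))
        (fun i => (inferInstance : MeasurableSpace (𝒵 i)))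
        (fun i => (inferInstance : MeasurableSpace (𝒵 i))) x)
      (fun x => Sum.rec (motive := fun x => Ω → Sum.elim 𝒵 𝒵 x) Z Z' x) P) :
    iIndep (coordSigma Z Z') P := by
  convert hindep.iIndep using 1
  funext x
  cases x <;> rfl

theorem coordSigma_le (hZ : ∀ i, Measurable (Z i)) (hZ' : ∀ i, Measurable (Z' i)) :
    ∀ x, coordSigma Z Z' x ≤ ‹MeasurableSpace Ω›
  | .inl i => (hZ i).comap_le
  | .inr i => (hZ' i).comap_le

theorem measurable_coordSigma_inl {S : Set (Fin n ⊕ Fin n)} {i : Fin n} (h : .inl i ∈ S) :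
    Measurable[⨆ x ∈ S, coordSigma Z Z' x] (Z i) :=
  Measurable.of_comap_le (le_iSup₂ (f := fun x (_ : x ∈ S) => coordSigma Z Z' x) _ h)

theorem measurable_coordSigma_inr {S : Set (Fin n ⊕ Fin n)} {i : Fin n} (h : .inr i ∈ S) :
    Measurable[⨆ x ∈ S, coordSigma Z Z' x] (Z' i) :=
  Measurable.of_comap_le (le_iSup₂ (f := fun x (_ : x ∈ S) => coordSigma Z Z' x) _ h)

theorem measurable_samplePrefix_coordSigma {S : Set (Fin n ⊕ Fin n)} {m : ℕ}
    (h : ∀ i : Fin n, (i : ℕ) < m → .inl i ∈ S) :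
    Measurable[⨆ x ∈ S, coordSigma Z Z' x] (samplePrefix Z m) :=
  @measurable_pi_lambda _ _ _ (⨆ x ∈ S, coordSigma Z Z' x) _ _ fun i =>
    measurable_coordSigma_inl (h i i.2)

theorem measurable_sampleSuffix_coordSigma {S : Set (Fin n ⊕ Fin n)} {k : Fin n}
    (h : ∀ i : Fin n, k < i → .inl i ∈ S) :
    Measurable[⨆ x ∈ S, coordSigma Z Z' x] (sampleSuffix Z k) :=
  @measurable_pi_lambda _ _ _ (⨆ x ∈ S, coordSigma Z Z' x) _ _ fun i =>
    measurable_coordSigma_inl (Z' := Z') (h i i.2)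

theorem indepFun_of_measurable_coordSigma (hind : iIndep (coordSigma Z Z') P)
    (hZ : ∀ i, Measurable (Z i)) (hZ' : ∀ i, Measurable (Z' i)) (S : Set (Fin n ⊕ Fin n))
    {α β : Type*} [MeasurableSpace α] [MeasurableSpace β] {X : Ω → α} {Y : Ω → β}
    (hX : Measurable[⨆ x ∈ S, coordSigma Z Z' x] X)
    (hY : Measurable[⨆ x ∈ Sᶜ, coordSigma Z Z' x] Y) : IndepFun X Y P :=
  indepFun_of_measurable_iSup (coordSigma_le hZ hZ') hind disjoint_compl_right hX hY

theorem indepFun_samplePrefix_coords (hind : iIndep (coordSigma Z Z') P)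
    (hZ : ∀ i, Measurable (Z i)) (hZ' : ∀ i, Measurable (Z' i)) (k : Fin n) :
    IndepFun (samplePrefix Z k) (fun ω => (Z k ω, Z' k ω, sampleSuffix Z k ω)) P := by
  refine indepFun_of_measurable_coordSigma hind hZ hZ' (Sum.inl '' {i | (i : ℕ) < k})
    (measurable_samplePrefix_coordSigma fun i hi => ⟨i, hi, rfl⟩) ?_
  refine (measurable_coordSigma_inl ?_).prodMk ((measurable_coordSigma_inr ?_).prodMk
    (measurable_sampleSuffix_coordSigma fun i hi => ?_)) <;> simp
  omega

theorem indepFun_samplePrefix_succ (hind : iIndep (coordSigma Z Z') P)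
    (hZ : ∀ i, Measurable (Z i)) (hZ' : ∀ i, Measurable (Z' i)) (k : Fin n) :
    IndepFun (samplePrefix Z (k + 1)) (fun ω => (Z' k ω, sampleSuffix Z k ω)) P := by
  refine indepFun_of_measurable_coordSigma hind hZ hZ' (Sum.inl '' {i | (i : ℕ) < k + 1})
    (measurable_samplePrefix_coordSigma fun i hi => ⟨i, hi, rfl⟩) ?_
  refine (measurable_coordSigma_inr ?_).prodMk
    (measurable_sampleSuffix_coordSigma fun i hi => ?_) <;> simp
  omega

theorem indepFun_coord_rest (hind : iIndep (coordSigma Z Z') P)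
    (hZ : ∀ i, Measurable (Z i)) (hZ' : ∀ i, Measurable (Z' i)) (k : Fin n) :
    IndepFun (Z k) (fun ω => (Z' k ω, samplePrefix Z k ω, sampleSuffix Z k ω)) P := by
  refine indepFun_of_measurable_coordSigma hind hZ hZ' {Sum.inl k}
    (measurable_coordSigma_inl rfl) ?_
  refine (measurable_coordSigma_inr ?_).prodMk
    ((measurable_samplePrefix_coordSigma fun i hi => ?_).prodMk
      (measurable_sampleSuffix_coordSigma fun i hi => ?_)) <;> simp <;> omega

theorem indepFun_copy_rest (hind : iIndep (coordSigma Z Z') P)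
    (hZ : ∀ i, Measurable (Z i)) (hZ' : ∀ i, Measurable (Z' i)) (k : Fin n) :
    IndepFun (Z' k) (fun ω => (Z k ω, samplePrefix Z k ω, sampleSuffix Z k ω)) P := by
  refine indepFun_of_measurable_coordSigma hind hZ hZ' {Sum.inr k}
    (measurable_coordSigma_inr rfl) ?_
  refine (measurable_coordSigma_inl ?_).prodMk
    ((measurable_samplePrefix_coordSigma fun i hi => ?_).prodMk
      (measurable_sampleSuffix_coordSigma fun i hi => ?_)) <;> simp

theorem identDistrib_swap_coord_copy [IsProbabilityMeasure P] (hind : iIndep (coordSigma Z Z') P)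
    (hZ : ∀ i, Measurable (Z i)) (hZ' : ∀ i, Measurable (Z' i))
    (hcopy : ∀ i, IdentDistrib (Z' i) (Z i) P P) (k : Fin n) :
    IdentDistrib (fun ω => (Z k ω, Z' k ω, samplePrefix Z k ω, sampleSuffix Z k ω))
      (fun ω => (Z' k ω, Z k ω, samplePrefix Z k ω, sampleSuffix Z k ω)) P P :=
  identDistrib_prodMk_swap_of_indepFun (hZ k) (hZ' k)
    ((measurable_samplePrefix hZ k).prodMk (measurable_sampleSuffix hZ k))
    (indepFun_coord_rest hind hZ hZ' k) (indepFun_copy_rest hind hZ hZ' k) (hcopy k).symm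

end Independence

section SemiEmpirical

variable {P : Measure Ω} [IsProbabilityMeasure P] {Z Z' : ∀ i : Fin n, Ω → 𝒵 i}
  {f : (∀ i, 𝒵 i) → ℝ}

def sampleDiff (Z Z' : ∀ i : Fin n, Ω → 𝒵 i) (f : (∀ i, 𝒵 i) → ℝ) (k : Fin n) (ω : Ω) : ℝ :=
  f (sampleDep Z ω) - f (sampleRepDep Z Z' k ω)

theorem identDistrib_sampleRepDep (hind : iIndep (coordSigma Z Z') P)
    (hZ : ∀ i, Measurable (Z i)) (hZ' : ∀ i, Measurable (Z' i))
    (hcopy : ∀ i, IdentDistrib (Z' i) (Z i) P P) (k : Fin n) :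
    IdentDistrib (sampleRepDep Z Z' k) (sampleDep Z) P P := by
  have h := (identDistrib_swap_coord_copy hind hZ hZ' hcopy k).comp
    (u := fun p : 𝒵 k × 𝒵 k × _ × _ => assemble k p.2.2.1 p.1 p.2.2.2)
    (by fun_prop)
  simpa only [Function.comp_def, assemble_eq_sampleDep, assemble_eq_sampleRepDep] using h.symm

theorem integrable_sampleRepDep (hind : iIndep (coordSigma Z Z') P)
    (hZ : ∀ i, Measurable (Z i)) (hZ' : ∀ i, Measurable (Z' i))
    (hcopy : ∀ i, IdentDistrib (Z' i) (Z i) P P) (hf : Measurable f)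
    (hint : Integrable (fun ω => f (sampleDep Z ω)) P) (k : Fin n) :
    Integrable (fun ω => f (sampleRepDep Z Z' k ω)) P :=
  ((identDistrib_sampleRepDep hind hZ hZ' hcopy k).comp hf).integrable_iff.mpr hint

theorem memLp_sampleDiff (hind : iIndep (coordSigma Z Z') P)
    (hZ : ∀ i, Measurable (Z i)) (hZ' : ∀ i, Measurable (Z' i))
    (hcopy : ∀ i, IdentDistrib (Z' i) (Z i) P P) (hf : Measurable f)
    (hsq : MemLp (fun ω => f (sampleDep Z ω)) 2 P) (k : Fin n) :
    MemLp (sampleDiff Z Z' f k) 2 P :=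
  hsq.sub (((identDistrib_sampleRepDep hind hZ hZ' hcopy k).comp hf).memLp_iff.mpr hsq)

theorem condExp_exp_sampleDiff_le_one (hind : iIndep (coordSigma Z Z') P)
    (hZ : ∀ i, Measurable (Z i)) (hZ' : ∀ i, Measurable (Z' i))
    (hcopy : ∀ i, IdentDistrib (Z' i) (Z i) P P) (hf : Measurable f) (l : ℝ) (k : Fin n) :
    P[fun ω => exp (l * sampleDiff Z Z' f k ω - l ^ 2 / 2 * sampleDiff Z Z' f k ω ^ 2) |
      filtDep Z k] ≤ᵐ[P] 1 := by
  set T : Ω → 𝒵 k × 𝒵 k × (∀ i : {i : Fin n // k < i}, 𝒵 i) :=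
    fun ω => (Z k ω, Z' k ω, sampleSuffix Z k ω)
  set σ : 𝒵 k × 𝒵 k × (∀ i : {i : Fin n // k < i}, 𝒵 i) → 𝒵 k × 𝒵 k × _ :=
    fun t => (t.2.1, t.1, t.2.2)
  set d : (∀ i : {i : Fin n // (i : ℕ) < k}, 𝒵 i) × 𝒵 k × 𝒵 k × _ → ℝ :=
    fun p => f (assemble k p.1 p.2.1 p.2.2.2) - f (assemble k p.1 p.2.2.1 p.2.2.2)
  have hd : Measurable d := by fun_prop
  have hlow : Measurable (samplePrefix Z k) := measurable_samplePrefix hZ k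
  have hT : Measurable T := (hZ k).prodMk ((hZ' k).prodMk (measurable_sampleSuffix hZ k))
  have hσ : Measurable σ := by fun_prop
  have hν : (P.map T).map σ = P.map T := by
    rw [Measure.map_map hσ hT]
    exact ((identDistrib_swap_coord_copy hind hZ hZ' hcopy k).comp
      (u := fun p : 𝒵 k × 𝒵 k × _ × _ => (p.1, p.2.1, p.2.2.2)) (by fun_prop)).map_eq.symm
  have : IsProbabilityMeasure (P.map T) := Measure.isProbabilityMeasure_map hT.aemeasurable
  have hD : sampleDiff Z Z' f k = fun ω => d (samplePrefix Z k ω, T ω) := by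
    funext ω
    simp only [d, T, sampleDiff, assemble_eq_sampleDep, assemble_eq_sampleRepDep]
  rw [hD, ← comap_samplePrefix]
  filter_upwards [condExp_comap_ae_eq_integral_of_indepFun (measurable_samplePrefix hZ k) hT
    (indepFun_samplePrefix_coords hind hZ hZ' k) (φ := fun p => exp (l * d p - l ^ 2 / 2 * d p ^ 2))
    (by fun_prop) (integrable_exp_of_ae_le (by fun_prop)
      (ae_of_all _ fun _ => mul_sub_sq_le_half _ _))] with ω hω
  rw [hω, Pi.one_apply]
  exact integral_exp_mul_sub_sq_le_one hσ hν (d := fun t => d (samplePrefix Z k ω, t))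
    (by fun_prop) (fun t => (neg_sub _ _).symm) l

theorem condExp_sampleRepDep_ae_eq (hind : iIndep (coordSigma Z Z') P)
    (hZ : ∀ i, Measurable (Z i)) (hZ' : ∀ i, Measurable (Z' i))
    (hcopy : ∀ i, IdentDistrib (Z' i) (Z i) P P) (hf : Measurable f)
    (hint : Integrable (fun ω => f (sampleDep Z ω)) P) (k : Fin n) :
    P[fun ω => f (sampleRepDep Z Z' k ω) | filtDep Z (k + 1)]
      =ᵐ[P] P[fun ω => f (sampleDep Z ω) | filtDep Z k] := by
  set φ : (∀ i : {i : Fin n // (i : ℕ) < k}, 𝒵 i) × 𝒵 k × (∀ i : {i : Fin n // k < i}, 𝒵 i) → ℝ :=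
    fun p => f (assemble k p.1 p.2.1 p.2.2)
  set restrict : (∀ i : {i : Fin n // (i : ℕ) < k + 1}, 𝒵 i) →
      ∀ i : {i : Fin n // (i : ℕ) < k}, 𝒵 i := fun x i => x ⟨i, Nat.lt_succ_of_lt i.2⟩
  have hφ : Measurable φ := by fun_prop
  have hrestrict : Measurable restrict := measurable_pi_lambda _ fun i => measurable_pi_apply _
  have hW : Measurable (sampleSuffix Z k) := measurable_sampleSuffix hZ k
  have hrep : (fun ω => f (sampleRepDep Z Z' k ω))
      = fun ω => φ (restrict (samplePrefix Z (k + 1) ω), Z' k ω, sampleSuffix Z k ω) :=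
    funext fun ω => congrArg f (assemble_eq_sampleRepDep Z Z' k ω).symm
  have hsample : (fun ω => f (sampleDep Z ω))
      = fun ω => φ (samplePrefix Z k ω, Z k ω, sampleSuffix Z k ω) :=
    funext fun ω => congrArg f (assemble_eq_sampleDep Z k ω).symm
  have hlaw : P.map (fun ω => (Z' k ω, sampleSuffix Z k ω))
      = P.map (fun ω => (Z k ω, sampleSuffix Z k ω)) :=
    ((identDistrib_swap_coord_copy hind hZ hZ' hcopy k).comp
      (u := fun p : 𝒵 k × 𝒵 k × _ × _ => (p.2.1, p.2.2.2)) (by fun_prop)).map_eq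
  have hindep_low : IndepFun (samplePrefix Z k) (fun ω => (Z k ω, sampleSuffix Z k ω)) P :=
    (indepFun_samplePrefix_coords hind hZ hZ' k).comp measurable_id
      (measurable_fst.prodMk (measurable_snd.comp measurable_snd))
  have hint_rep := integrable_sampleRepDep hind hZ hZ' hcopy hf hint k
  rw [hrep] at hint_rep ⊢
  rw [hsample] at hint ⊢
  rw [← comap_samplePrefix, ← comap_samplePrefix]
  filter_upwards [condExp_comap_ae_eq_integral_of_indepFun (measurable_samplePrefix hZ (k + 1))
      ((hZ' k).prodMk hW) (indepFun_samplePrefix_succ hind hZ hZ' k)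
      (φ := fun p => φ (restrict p.1, p.2)) (by fun_prop) hint_rep,
    condExp_comap_ae_eq_integral_of_indepFun (measurable_samplePrefix hZ k) ((hZ k).prodMk hW)
      hindep_low hφ hint] with ω h₁ h₂
  rw [h₁, h₂, hlaw]
  rfl

theorem condExp_sampleDiff_ae_eq (hind : iIndep (coordSigma Z Z') P)
    (hZ : ∀ i, Measurable (Z i)) (hZ' : ∀ i, Measurable (Z' i))
    (hcopy : ∀ i, IdentDistrib (Z' i) (Z i) P P) (hf : Measurable f)
    (hint : Integrable (fun ω => f (sampleDep Z ω)) P) (k : Fin n) :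
    P[sampleDiff Z Z' f k | filtDep Z (k + 1)]
      =ᵐ[P] P[fun ω => f (sampleDep Z ω) | filtDep Z (k + 1)]
        - P[fun ω => f (sampleDep Z ω) | filtDep Z k] := by
  filter_upwards [condExp_sub (m := filtDep Z (k + 1)) hint
      (integrable_sampleRepDep hind hZ hZ' hcopy hf hint k),
    condExp_sampleRepDep_ae_eq hind hZ hZ' hcopy hf hint k] with ω h₁ h₂
  rw [Pi.sub_apply, ← h₂, ← Pi.sub_apply, ← h₁]
  rfl

theorem sum_condExp_ae_eq_gap_sub_varEst (hind : iIndep (coordSigma Z Z') P)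
    (hZ : ∀ i, Measurable (Z i)) (hZ' : ∀ i, Measurable (Z' i))
    (hcopy : ∀ i, IdentDistrib (Z' i) (Z i) P P) (hf : Measurable f)
    (hsq : MemLp (fun ω => f (sampleDep Z ω)) 2 P) (l : ℝ) :
    (fun ω => ∑ k : Fin n, P[fun ω => l * sampleDiff Z Z' f k ω
        - l ^ 2 / 2 * sampleDiff Z Z' f k ω ^ 2 | filtDep Z (k + 1)] ω)
      =ᵐ[P] fun ω => l * gapDep P Z f ω - l ^ 2 / 2 * varEstDep P Z Z' f ω := by
  set M : ℕ → Ω → ℝ := fun j => P[fun ω => f (sampleDep Z ω) | filtDep Z j]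
  have hterm : ∀ k : Fin n, P[fun ω => l * sampleDiff Z Z' f k ω
      - l ^ 2 / 2 * sampleDiff Z Z' f k ω ^ 2 | filtDep Z (k + 1)] =ᵐ[P] fun ω =>
        l * (M (k + 1) ω - M k ω)
          - l ^ 2 / 2 * P[fun ω => sampleDiff Z Z' f k ω ^ 2 | filtDep Z (k + 1)] ω := by
    intro k
    have hD := memLp_sampleDiff hind hZ hZ' hcopy hf hsq k
    filter_upwards [condExp_mul_sub_mul (hD.integrable one_le_two) hD.integrable_sq l (l ^ 2 / 2),
      condExp_sampleDiff_ae_eq hind hZ hZ' hcopy hf (hsq.integrable one_le_two) k] with ω h₁ h₂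
    rw [h₁, h₂]
    rfl
  have hM_top : M n = fun ω => f (sampleDep Z ω) :=
    condExp_of_stronglyMeasurable (filtDep_le Z hZ n)
      (hf.comp (measurable_sampleDep_filtDep Z)).stronglyMeasurable (hsq.integrable one_le_two)
  have hM_zero : M 0 = fun _ => ∫ ω, f (sampleDep Z ω) ∂P := by
    simp only [M, filtDep_zero, condExp_bot]
  filter_upwards [ae_all_iff.2 hterm] with ω hω
  have htelescope : ∑ k : Fin n, (M (k + 1) ω - M k ω) = M n ω - M 0 ω := by
    rw [Fin.sum_univ_eq_sum_range (fun j => M (j + 1) ω - M j ω)]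
    exact Finset.sum_range_sub (fun j => M j ω) n
  simp only [hω, Finset.sum_sub_distrib, ← Finset.mul_sum, htelescope, hM_top, hM_zero]
  rfl

end SemiEmpirical

/-- In the heterogeneous setting, `(Δ, √V)` is a canonical pair:
for every `λ ∈ ℝ`, `E[exp(λ·Δ − (λ²/2)·V)] ≤ 1`. -/
theorem gap_varEst_canonical_pair_heterogeneous
    (P : Measure Ω) [IsProbabilityMeasure P]
    (Z Z' : ∀ i : Fin n, Ω → 𝒵 i)
    (hZ : ∀ i, Measurable (Z i)) (hZ' : ∀ i, Measurable (Z' i))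
    (hindep : iIndepFun (β := Sum.elim 𝒵 𝒵)
      (m := fun x => Sum.rec (motive := fun x => MeasurableSpace (Sum.elim 𝒵 𝒵 x))
        (fun i => (inferInstance : MeasurableSpace (𝒵 i)))
        (fun i => (inferInstance : MeasurableSpace (𝒵 i))) x)
      (fun x => Sum.rec (motive := fun x => Ω → Sum.elim 𝒵 𝒵 x) Z Z' x) P)
    (hcopy : ∀ i, IdentDistrib (Z' i) (Z i) P P)
    (f : (∀ i, 𝒵 i) → ℝ) (hf : Measurable f)
    (hsq : MemLp (fun ω => f (sampleDep Z ω)) 2 P)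
    (l : ℝ) :
    ∫⁻ ω, ENNReal.ofReal
        (Real.exp (l * gapDep P Z f ω - l ^ 2 / 2 * varEstDep P Z Z' f ω)) ∂P ≤ 1 := by
  have hind := iIndep_coordSigma hindep
  calc ∫⁻ ω, ENNReal.ofReal (exp (l * gapDep P Z f ω - l ^ 2 / 2 * varEstDep P Z Z' f ω)) ∂P
      = ∫⁻ ω, ENNReal.ofReal (exp (∑ k : Fin n, P[fun ω => l * sampleDiff Z Z' f k ω
          - l ^ 2 / 2 * sampleDiff Z Z' f k ω ^ 2 | filtDep Z (k + 1)] ω)) ∂P := by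
        refine lintegral_congr_ae ?_
        filter_upwards [sum_condExp_ae_eq_gap_sub_varEst hind hZ hZ' hcopy hf hsq l] with ω hω
        rw [hω]
    _ ≤ 1 := by
        refine lintegral_exp_sum_condExp_le_one (filtDep_mono Z) (filtDep_le Z hZ)
          (fun k => ?_) (fun k ω => mul_sub_sq_le_half l _)
          (condExp_exp_sampleDiff_le_one hind hZ hZ' hcopy hf l)
        have hD := memLp_sampleDiff hind hZ hZ' hcopy hf hsq k
        exact ((hD.integrable one_le_two).const_mul l).sub (hD.integrable_sq.const_mul _)
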